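/- arXiv:1401.1399 — 6 statements merged into one kernel-verified Lean document; each statement's English description precedes it below -/
import Mathlib

section
/- Let G₁ and G₂ be finite simple graphs. For i ∈ {1,2}, let Gᵢ' be obtained from Gᵢ by adding a new vertex uᵢ adjacent to all vertices of Gᵢ. Then G₁ is a minor of G₂ if and only if G₁' is a minor of G₂'. -/
/-- `H` is a minor of `G`: there are pairwise disjoint connected branch sets in `G`,
one for each vertex of `H`, with an edge of `G` between the branch sets of any two
adjacent vertices of `H`. -/
def IsMinorOf {α β : Type*} (H : SimpleGraph α) (G : SimpleGraph β) : Prop :=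
  ∃ B : α → Set β,
    (∀ a, (G.induce (B a)).Connected) ∧
    (Pairwise fun a a' => Disjoint (B a) (B a')) ∧
    ∀ a a', H.Adj a a' → ∃ u ∈ B a, ∃ v ∈ B a', G.Adj u v

/-- The graph obtained from `G` by adding a new vertex adjacent to all other vertices. -/
def coneGraph {α : Type*} (G : SimpleGraph α) : SimpleGraph (Option α) where
  Adj x y :=
    match x, y with
    | some u, some v => G.Adj u v
    | some _, none => True
    | none, some _ => True
    | none, none => False
  symm := by
    constructor
    rintro (_ | u) (_ | v) h
    · exact h
    · trivial
    · trivial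
    · exact G.adj_symm h
  loopless := by
    constructor
    rintro (_ | u) h
    · exact h
    · exact G.irrefl h

/-!
A minor model of `G₁` in `G₂` extends to the cones by giving the apex of `G₁'` the apex of `G₂'`
as its branch set. Conversely, the apex of `G₂'` lies in at most one branch set of a model of
`G₁'`. If it lies in that of a vertex `a₀` of `G₁`, let the apex of `G₁'` play the role of `a₀`:
this is again a copy of `G₁` inside `G₁'`, as the apex is adjacent to everything. Either way we
get a model of `G₁` in `G₂'` avoiding the apex of `G₂'`, i.e. a model of `G₁` in `G₂`.
-/

open Function

noncomputable def SimpleGraph.Embedding.induceImageIso {V W : Type*} {G : SimpleGraph V}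
    {G' : SimpleGraph W} (e : G ↪g G') (s : Set V) : G.induce s ≃g G'.induce (e '' s) where
  toEquiv := Equiv.Set.image e s e.injective
  map_rel_iff' := e.map_adj_iff

def IsMinorModel {α β : Type*} (H : SimpleGraph α) (G : SimpleGraph β) (B : α → Set β) : Prop :=
  (∀ a, (G.induce (B a)).Connected) ∧
    (Pairwise fun a a' => Disjoint (B a) (B a')) ∧
    ∀ a a', H.Adj a a' → ∃ u ∈ B a, ∃ v ∈ B a', G.Adj u v

namespace IsMinorModel

variable {α α' β γ : Type*} {H : SimpleGraph α} {H' : SimpleGraph α'} {G : SimpleGraph β}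
  {G' : SimpleGraph γ} {B : α → Set β}

theorem _root_.isMinorOf_iff_exists_isMinorModel :
    IsMinorOf H G ↔ ∃ B, IsMinorModel H G B := Iff.rfl

theorem nonempty (hB : IsMinorModel H G B) (a : α) : (B a).Nonempty :=
  let ⟨⟨v, hv⟩⟩ := (hB.1 a).nonempty
  ⟨v, hv⟩

theorem comp_hom {B : α' → Set β} (hB : IsMinorModel H' G B) (f : H →g H') (hf : Injective f) :
    IsMinorModel H G (B ∘ f) :=
  ⟨fun a => hB.1 (f a), fun _ _ hne => hB.2.1 (hf.ne hne),
    fun _ _ hadj => hB.2.2 _ _ (f.map_adj hadj)⟩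

theorem image_embedding (hB : IsMinorModel H G B) (e : G ↪g G') :
    IsMinorModel H G' fun a => e '' B a := by
  refine ⟨fun a => (e.induceImageIso (B a)).connected_iff.1 (hB.1 a),
    fun a a' hne => (Set.disjoint_image_iff e.injective).2 (hB.2.1 hne), fun a a' hadj => ?_⟩
  obtain ⟨u, hu, v, hv, huv⟩ := hB.2.2 a a' hadj
  exact ⟨e u, Set.mem_image_of_mem e hu, e v, Set.mem_image_of_mem e hv, e.map_adj_iff.2 huv⟩

theorem preimage_embedding {B : α → Set γ} (hB : IsMinorModel H G' B) (e : G ↪g G')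
    (hrange : ∀ a, B a ⊆ Set.range e) : IsMinorModel H G fun a => e ⁻¹' B a := by
  refine ⟨fun a => ?_, fun a a' hne => (hB.2.1 hne).preimage e, fun a a' hadj => ?_⟩
  · have hB' := hB.1 a
    rw [← Set.image_preimage_eq_of_subset (hrange a)] at hB'
    exact (e.induceImageIso _).connected_iff.2 hB'
  · obtain ⟨u, hu, v, hv, huv⟩ := hB.2.2 a a' hadj
    obtain ⟨x, rfl⟩ := hrange a hu
    obtain ⟨y, rfl⟩ := hrange a' hv
    exact ⟨x, hu, y, hv, e.map_adj_iff.1 huv⟩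

end IsMinorModel

namespace coneGraph

variable {α : Type*} (G : SimpleGraph α)

@[simp] theorem adj_some_some {u v : α} : (coneGraph G).Adj (some u) (some v) ↔ G.Adj u v :=
  Iff.rfl

@[simp] theorem adj_none_some (v : α) : (coneGraph G).Adj none (some v) := trivial

@[simp] theorem adj_some_none (v : α) : (coneGraph G).Adj (some v) none := trivial

def embedding : G ↪g coneGraph G where
  toFun := some
  inj' := Option.some_injective α
  map_rel_iff' := Iff.rfl

@[simp] theorem range_embedding : Set.range (embedding G) = {none}ᶜ := by
  rw [← Set.compl_range_some, compl_compl]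
  rfl

def homApexAt [DecidableEq α] (a₀ : α) : G →g coneGraph G where
  toFun a := if a = a₀ then none else some a
  map_rel' {a a'} hadj := by
    by_cases ha : a = a₀ <;> by_cases ha' : a' = a₀
    · exact absurd (ha.trans ha'.symm) hadj.ne
    all_goals simp [ha, ha', hadj]

@[simp] theorem homApexAt_apply [DecidableEq α] (a₀ a : α) :
    homApexAt G a₀ a = if a = a₀ then none else some a := rfl

theorem homApexAt_injective [DecidableEq α] (a₀ : α) : Injective (homApexAt G a₀) := by
  intro a a' h
  by_cases ha : a = a₀ <;> by_cases ha' : a' = a₀ <;> simp_all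

end coneGraph

namespace IsMinorModel

variable {α β : Type*} {H : SimpleGraph α} {G : SimpleGraph β}

theorem cone {B : α → Set β} (hB : IsMinorModel H G B) :
    IsMinorModel (coneGraph H) (coneGraph G)
      fun x => x.elim {none} fun a => coneGraph.embedding G '' B a := by
  have hsome := hB.image_embedding (coneGraph.embedding G)
  have hnone_notMem (a : α) : none ∉ coneGraph.embedding G '' B a := by
    rintro ⟨v, -, hv⟩
    cases hv
  refine ⟨?_, ?_, ?_⟩
  · rintro (_ | a)
    · show ((coneGraph G).induce {none}).Connected
      exact .of_subsingleton
    · exact hsome.1 a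
  · rintro (_ | a) (_ | a') hne
    · exact absurd rfl hne
    · exact Set.disjoint_singleton_left.2 (hnone_notMem a')
    · exact Set.disjoint_singleton_right.2 (hnone_notMem a)
    · exact hsome.2.1 fun h => hne (congrArg some h)
  · rintro (_ | a) (_ | a') hadj
    · exact absurd hadj id
    · obtain ⟨v, hv⟩ := hB.nonempty a'
      exact ⟨none, rfl, some v, ⟨v, hv, rfl⟩, trivial⟩
    · obtain ⟨v, hv⟩ := hB.nonempty a
      exact ⟨some v, ⟨v, hv, rfl⟩, none, rfl, trivial⟩
    · exact hsome.2.2 a a' hadj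

theorem exists_hom_avoiding_apex {B : Option α → Set (Option β)}
    (hB : IsMinorModel (coneGraph H) (coneGraph G) B) :
    ∃ f : H →g coneGraph H, Injective f ∧ ∀ a, none ∉ B (f a) := by
  classical
  have hunique {x y : Option α} (hx : none ∈ B x) (hy : none ∈ B y) : x = y := by
    by_contra hne
    exact Set.disjoint_left.1 (hB.2.1 hne) hx hy
  by_cases h : ∃ a₀, none ∈ B (some a₀)
  · obtain ⟨a₀, ha₀⟩ := h
    refine ⟨coneGraph.homApexAt H a₀, coneGraph.homApexAt_injective H a₀, fun a hnone => ?_⟩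
    by_cases ha : a = a₀
    · rw [coneGraph.homApexAt_apply, if_pos ha] at hnone
      simpa using hunique hnone ha₀
    · rw [coneGraph.homApexAt_apply, if_neg ha] at hnone
      exact ha (Option.some_injective α (hunique hnone ha₀))
  · push Not at h
    exact ⟨coneGraph.embedding H, (coneGraph.embedding H).injective, h⟩

end IsMinorModel

theorem stmt4_general {α β : Type*}
    (G₁ : SimpleGraph α) (G₂ : SimpleGraph β) :
    IsMinorOf G₁ G₂ ↔ IsMinorOf (coneGraph G₁) (coneGraph G₂) := by
  simp only [isMinorOf_iff_exists_isMinorModel]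
  constructor
  · rintro ⟨B, hB⟩
    exact ⟨_, hB.cone⟩
  · rintro ⟨B, hB⟩
    obtain ⟨f, hf, hapex⟩ := hB.exists_hom_avoiding_apex
    refine ⟨_, (hB.comp_hom f hf).preimage_embedding (coneGraph.embedding G₂) fun a => ?_⟩
    rw [coneGraph.range_embedding, Set.subset_compl_singleton_iff]
    exact hapex a

/-- `G₁` is a minor of `G₂` iff the cone over `G₁` is a minor of the cone over `G₂`. -/
theorem stmt4 {α β : Type*} [Fintype α] [Fintype β]
    (G₁ : SimpleGraph α) (G₂ : SimpleGraph β) :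
    IsMinorOf G₁ G₂ ↔ IsMinorOf (coneGraph G₁) (coneGraph G₂) :=
  stmt4_general G₁ G₂
end

section
/- Let (M, d) be a metric space, let t, n be positive integers, let f be a non-decreasing positive integer-valued function, and define t₀ = t, tᵢ = tᵢ₋₁ + f(tᵢ₋₁) for 1 ≤ i ≤ n−1, and T = t_{n−1}. Let Z, U ⊆ M with |Z| ≤ n, and suppose every u ∈ U has some z ∈ Z with d(u, z) < t. Then there exist Z' ⊆ Z and t' ≤ T such that: (1) every u ∈ U has some z ∈ Z' with d(u, z) < t', and (2) d(z₁, z₂) ≥ f(t') for all distinct z₁, z₂ ∈ Z'. -/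
/-!
Greedy merging. While two centres are closer than the current separation threshold `s i`,
delete one of them: by the triangle inequality the survivor covers its neighbourhood with
radius enlarged by `s i`, so the cover survives with the next radius `r (i + 1) ≥ r i + s i`.
Each step deletes a centre, so after at most `|Z| - 1` steps the remaining centres are
separated.
-/

open Set

section

variable {M : Type*} [PseudoMetricSpace M]

def IsBallCover (r : ℝ) (U Z : Set M) : Prop :=
  ∀ u ∈ U, ∃ z ∈ Z, dist u z < r

theorem IsBallCover.mono_radius {r r' : ℝ} {U Z : Set M} (h : IsBallCover r U Z)
    (hr : r ≤ r') : IsBallCover r' U Z := fun u hu =>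
  let ⟨z, hz, hd⟩ := h u hu
  ⟨z, hz, hd.trans_le hr⟩

theorem IsBallCover.sdiff_singleton {r s : ℝ} {U Z : Set M} (h : IsBallCover r U Z)
    {z₁ z₂ : M} (h₁ : z₁ ∈ Z) (hne : z₁ ≠ z₂) (hd : dist z₁ z₂ < s) :
    IsBallCover (r + s) U (Z \ {z₂}) := by
  intro u hu
  obtain ⟨z, hz, hdz⟩ := h u hu
  rcases eq_or_ne z z₂ with rfl | hz₂
  · refine ⟨z₁, ⟨h₁, hne⟩, ?_⟩
    calc dist u z₁ ≤ dist u z + dist z z₁ := dist_triangle u z z₁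
      _ < r + s := add_lt_add hdz (by rwa [dist_comm])
  · have hs : 0 < s := dist_nonneg.trans_lt hd
    exact ⟨z, ⟨hz, hz₂⟩, by linarith⟩

theorem exists_subset_isBallCover_pairwise_le_dist (r s : ℕ → ℝ)
    (hrs : ∀ i, r i + s i ≤ r (i + 1)) (k : ℕ) {U Z : Set M} (hZ : Z.Finite)
    (hcard : Z.ncard ≤ k + 1) (hcov : IsBallCover (r 0) U Z) :
    ∃ Z' ⊆ Z, ∃ j ≤ k, IsBallCover (r j) U Z' ∧ Z'.Pairwise (fun a b => s j ≤ dist a b) := by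
  induction k generalizing r s Z with
  | zero =>
    have hZ₁ : Z.Subsingleton := fun a ha b hb => (ncard_le_one hZ).1 hcard a ha b hb
    exact ⟨Z, subset_rfl, 0, le_rfl, hcov, hZ₁.pairwise _⟩
  | succ k ih =>
    by_cases hsep : Z.Pairwise (fun a b => s 0 ≤ dist a b)
    · exact ⟨Z, subset_rfl, 0, (k + 1).zero_le, hcov, hsep⟩
    obtain ⟨z₁, h₁, z₂, h₂, hne, hd⟩ : ∃ z₁ ∈ Z, ∃ z₂ ∈ Z, z₁ ≠ z₂ ∧ dist z₁ z₂ < s 0 := by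
      simpa [Set.Pairwise] using hsep
    have hcov' : IsBallCover (r 1) U (Z \ {z₂}) :=
      (hcov.sdiff_singleton h₁ hne hd).mono_radius (hrs 0)
    have hcard' : (Z \ {z₂}).ncard ≤ k + 1 := by
      rw [ncard_sdiff_singleton_of_mem h₂]
      omega
    obtain ⟨Z', hsub, j, hj, hcovj, hsepj⟩ :=
      ih (fun i => r (i + 1)) (fun i => s (i + 1)) (fun i => hrs (i + 1)) hZ.sdiff hcard' hcov'
    exact ⟨Z', hsub.trans sdiff_subset, j + 1, by omega, hcovj, hsepj⟩

end

theorem stmt5_general {M : Type*} [MetricSpace M] (t n : ℕ)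
    (f : ℕ → ℕ)
    (tseq : ℕ → ℕ) (h0 : tseq 0 = t) (hs : ∀ i, tseq (i + 1) = tseq i + f (tseq i))
    (Z U : Set M) (hZfin : Z.Finite) (hZcard : Z.ncard ≤ n)
    (hcov : ∀ u ∈ U, ∃ z ∈ Z, dist u z < (t : ℝ)) :
    ∃ (Z' : Set M) (t' : ℕ), Z' ⊆ Z ∧ t' ≤ tseq (n - 1) ∧
      (∀ u ∈ U, ∃ z ∈ Z', dist u z < (t' : ℝ)) ∧
      ∀ z₁ ∈ Z', ∀ z₂ ∈ Z', z₁ ≠ z₂ → (f t' : ℝ) ≤ dist z₁ z₂ := by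
  have tseq_mono : Monotone tseq :=
    monotone_nat_of_le_succ fun i => (hs i).symm ▸ Nat.le_add_right _ _
  obtain ⟨Z', hsub, j, hj, hcovj, hsepj⟩ :=
    exists_subset_isBallCover_pairwise_le_dist (fun i => (tseq i : ℝ)) (fun i => (f (tseq i) : ℝ))
      (fun i => by simp [hs i]) (n - 1) hZfin (by omega) (h0 ▸ hcov)
  exact ⟨Z', tseq j, hsub, tseq_mono hj, hcovj, hsepj⟩

/-- Greedy sparsification in a metric space: given at most `n` points `Z` covering `U`
by balls of radius `t`, one can find `Z' ⊆ Z` and `t' ≤ T` so that `Z'` still covers `U`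
by balls of radius `t'` while the points of `Z'` are pairwise at distance at least `f t'`.
Here `T = t_{n-1}` with `t_0 = t` and `t_{i+1} = t_i + f(t_i)`. -/
theorem stmt5 {M : Type*} [MetricSpace M] (t n : ℕ) (ht : 0 < t) (hn : 0 < n)
    (f : ℕ → ℕ) (hf : Monotone f) (hfpos : ∀ m, 0 < f m)
    (tseq : ℕ → ℕ) (h0 : tseq 0 = t) (hs : ∀ i, tseq (i + 1) = tseq i + f (tseq i))
    (Z U : Set M) (hZfin : Z.Finite) (hZcard : Z.ncard ≤ n)
    (hcov : ∀ u ∈ U, ∃ z ∈ Z, dist u z < (t : ℝ)) :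
    ∃ (Z' : Set M) (t' : ℕ), Z' ⊆ Z ∧ t' ≤ tseq (n - 1) ∧
      (∀ u ∈ U, ∃ z ∈ Z', dist u z < (t' : ℝ)) ∧
      ∀ z₁ ∈ Z', ∀ z₂ ∈ Z', z₁ ≠ z₂ → (f t' : ℝ) ≤ dist z₁ z₂ :=
  stmt5_general t n f tseq h0 hs Z U hZfin hZcard hcov
end

section
/- Let (M, d) be a metric space, t, n positive integers, f a non-decreasing positive function, and T as in the greedy sparsification bound (T = t_{n−1} where t₀ = t and tᵢ = tᵢ₋₁ + f(tᵢ₋₁)). Let Z, U ⊆ M with |Z| ≤ n such that every u ∈ U is within distance < t of Z, and let Z'' ⊆ Z be a subset whose elements are pairwise at distance ≥ T. Then one can choose the sparsified set Z' ⊆ Z with Z'' ⊆ Z', such that for some t' ≤ T, every u ∈ U is within distance < t' of Z' and distinct elements of Z' are at distance ≥ f(t'). -/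
/-!
Greedy sparsification: while the current centres `W` (covering `U` at radius `ρ i`) contain two
points closer than `δ i`, delete one of them; every point of `U` served by the deleted centre is
now served by its close neighbour, at radius `ρ i + δ i ≤ ρ (i + 1)`. Each round removes a point,
so at most `|Z| - 1` rounds occur. The protected points `Z''` are never deleted: a close pair has
distance `< δ i ≤ T`, so it cannot lie entirely inside the `T`-separated set `Z''`.
-/

section

variable {M : Type*} [PseudoMetricSpace M]

lemma covers_diff_singleton {W U : Set M} {r s : ℝ} {a b : M}
    (hcov : ∀ u ∈ U, ∃ z ∈ W, dist u z < r) (ha : a ∈ W) (hab : a ≠ b) (hba : dist b a < s) :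
    ∀ u ∈ U, ∃ z ∈ W \ {b}, dist u z < r + s := by
  intro u hu
  obtain ⟨z, hzW, hz⟩ := hcov u hu
  by_cases hzb : z = b
  · subst hzb
    exact ⟨a, ⟨ha, hab⟩, (dist_triangle u z a).trans_lt (add_lt_add hz hba)⟩
  · exact ⟨z, ⟨hzW, hzb⟩, hz.trans_le (le_add_of_nonneg_right (dist_nonneg.trans hba.le))⟩

lemma exists_close_pair_not_mem {W Z'' : Set M} {s : ℝ}
    (hsep : Z''.Pairwise fun x y => s ≤ dist x y)
    (hW : ¬ W.Pairwise fun x y => s ≤ dist x y) :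
    ∃ a ∈ W, ∃ b ∈ W, a ≠ b ∧ dist b a < s ∧ b ∉ Z'' := by
  simp only [Set.Pairwise, not_forall, not_le, exists_prop] at hW
  obtain ⟨x, hx, y, hy, hxy, hd⟩ := hW
  by_cases hyZ : y ∈ Z''
  · have hxZ : x ∉ Z'' := fun hxZ => (hsep hxZ hyZ hxy).not_gt hd
    exact ⟨y, hy, x, hx, hxy.symm, hd, hxZ⟩
  · exact ⟨x, hx, y, hy, hxy, dist_comm x y ▸ hd, hyZ⟩

theorem exists_separated_subset_of_covers (ρ δ : ℕ → ℝ) (hρ : ∀ i, ρ i + δ i ≤ ρ (i + 1))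
    {W U Z'' : Set M} (hW : W.Finite) (hZ'' : Z'' ⊆ W)
    (hsep : ∀ j, j + 1 < W.ncard → Z''.Pairwise fun x y => δ j ≤ dist x y)
    (hcov : ∀ u ∈ U, ∃ z ∈ W, dist u z < ρ 0) :
    ∃ Z' j, Z'' ⊆ Z' ∧ Z' ⊆ W ∧ j ≤ W.ncard - 1 ∧ (∀ u ∈ U, ∃ z ∈ Z', dist u z < ρ j) ∧
      Z'.Pairwise fun x y => δ j ≤ dist x y := by
  induction hcard : W.ncard generalizing ρ δ W with
  | zero =>
    have hWe : W = ∅ := (Set.ncard_eq_zero hW).mp hcard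
    exact ⟨W, 0, hZ'', subset_rfl, Nat.zero_le _, hcov, by simp [hWe]⟩
  | succ k ih =>
    by_cases hWsep : W.Pairwise fun x y => δ 0 ≤ dist x y
    · exact ⟨W, 0, hZ'', subset_rfl, Nat.zero_le _, hcov, hWsep⟩
    have hk : 0 < k := by
      by_contra! hk0
      refine hWsep (Set.Subsingleton.pairwise (fun x hx y hy => ?_) _)
      exact (Set.ncard_le_one hW).mp (by omega) x hx y hy
    obtain ⟨a, ha, b, hb, hab, hba, hbZ''⟩ :=
      exists_close_pair_not_mem (hsep 0 (by omega)) hWsep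
    have hcard' : (W \ {b}).ncard = k := by
      rw [Set.ncard_sdiff_singleton_of_mem hb, hcard, Nat.add_sub_cancel]
    have hcov' : ∀ u ∈ U, ∃ z ∈ W \ {b}, dist u z < ρ 1 := fun u hu => by
      obtain ⟨z, hz, hd⟩ := covers_diff_singleton hcov ha hab hba u hu
      exact ⟨z, hz, hd.trans_le (hρ 0)⟩
    obtain ⟨Z', j, hZ''Z', hZ'W, hj, hZ'cov, hZ'sep⟩ :=
      ih (ρ ∘ Nat.succ) (δ ∘ Nat.succ) (fun i => hρ (i + 1)) hW.sdiff
        (Set.subset_sdiff_singleton hZ'' hbZ'') (fun j hj => hsep (j + 1) (by omega)) hcov' hcard'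
    exact ⟨Z', j + 1, hZ''Z', hZ'W.trans Set.sdiff_subset, by omega, hZ'cov, hZ'sep⟩

end

theorem stmt6_general {M : Type*} [MetricSpace M] (t n : ℕ) (f : ℕ → ℕ)
    (tseq : ℕ → ℕ) (h0 : tseq 0 = t) (hs : ∀ i, tseq (i + 1) = tseq i + f (tseq i))
    (Z U : Set M) (hZfin : Z.Finite) (hZcard : Z.ncard ≤ n)
    (hcov : ∀ u ∈ U, ∃ z ∈ Z, dist u z < (t : ℝ))
    (Z'' : Set M) (hZ''sub : Z'' ⊆ Z)
    (hfar : ∀ z₁ ∈ Z'', ∀ z₂ ∈ Z'', z₁ ≠ z₂ → (tseq (n - 1) : ℝ) ≤ dist z₁ z₂) :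
    ∃ (Z' : Set M) (t' : ℕ), Z'' ⊆ Z' ∧ Z' ⊆ Z ∧ t' ≤ tseq (n - 1) ∧
      (∀ u ∈ U, ∃ z ∈ Z', dist u z < (t' : ℝ)) ∧
      ∀ z₁ ∈ Z', ∀ z₂ ∈ Z', z₁ ≠ z₂ → (f t' : ℝ) ≤ dist z₁ z₂ := by
  have htseq_mono : Monotone tseq := monotone_nat_of_le_succ fun i => by rw [hs]; omega
  have hρ (i : ℕ) : (tseq i : ℝ) + f (tseq i) ≤ tseq (i + 1) := by exact_mod_cast (hs i).ge
  have hsep (j : ℕ) (hj : j + 1 < Z.ncard) :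
      Z''.Pairwise fun x y => (f (tseq j) : ℝ) ≤ dist x y := fun x hx y hy hxy => by
    have : f (tseq j) ≤ tseq (n - 1) := (hs j ▸ Nat.le_add_left _ _).trans (htseq_mono (by omega))
    exact (Nat.cast_le.mpr this).trans (hfar x hx y hy hxy)
  obtain ⟨Z', j, hZ''Z', hZ'Z, hj, hZ'cov, hZ'sep⟩ :=
    exists_separated_subset_of_covers (fun i => (tseq i : ℝ)) (fun i => (f (tseq i) : ℝ)) hρ
      hZfin hZ''sub hsep (h0 ▸ hcov)
  exact ⟨Z', tseq j, hZ''Z', hZ'Z, htseq_mono (by omega), hZ'cov, hZ'sep⟩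

/-- Greedy sparsification with prescribed survivors: in the setting of the greedy
sparsification bound (`T = t_{n-1}`, `t_0 = t`, `t_{i+1} = t_i + f(t_i)`), if `Z'' ⊆ Z`
has pairwise distances at least `T`, then the sparsified set `Z' ⊆ Z` can be chosen to
contain `Z''`. -/
theorem stmt6 {M : Type*} [MetricSpace M] (t n : ℕ) (ht : 0 < t) (hn : 0 < n)
    (f : ℕ → ℕ) (hf : Monotone f) (hfpos : ∀ m, 0 < f m)
    (tseq : ℕ → ℕ) (h0 : tseq 0 = t) (hs : ∀ i, tseq (i + 1) = tseq i + f (tseq i))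
    (Z U : Set M) (hZfin : Z.Finite) (hZcard : Z.ncard ≤ n)
    (hcov : ∀ u ∈ U, ∃ z ∈ Z, dist u z < (t : ℝ))
    (Z'' : Set M) (hZ''sub : Z'' ⊆ Z)
    (hfar : ∀ z₁ ∈ Z'', ∀ z₂ ∈ Z'', z₁ ≠ z₂ → (tseq (n - 1) : ℝ) ≤ dist z₁ z₂) :
    ∃ (Z' : Set M) (t' : ℕ), Z'' ⊆ Z' ∧ Z' ⊆ Z ∧ t' ≤ tseq (n - 1) ∧
      (∀ u ∈ U, ∃ z ∈ Z', dist u z < (t' : ℝ)) ∧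
      ∀ z₁ ∈ Z', ∀ z₂ ∈ Z', z₁ ≠ z₂ → (f t' : ℝ) ≤ dist z₁ z₂ :=
  stmt6_general t n f tseq h0 hs Z U hZfin hZcard hcov Z'' hZ''sub hfar
end

section
/- Let G₀ be a graph with tree-width tw(G₀), and let G = G₀ ∪ G₁ ∪ … ∪ G_m where G₁, …, G_m are vortices of depth at most d with pairwise disjoint vertex sets, V(G₀) ∩ V(Gᵢ) equals the set of boundary vertices of Gᵢ, and for each i the boundary vertices of Gᵢ, in their vortex order, form a path in G₀. Then tw(G) ≤ d·(tw(G₀) + 1) − 1. -/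
/-!
Replace every vertex `u` of a tree decomposition of `G₀` by a set `f u` of at most `d` vertices:
a boundary vertex `vⱼ` of a vortex by its vortex bag `Bⱼ`, any other vertex of a vortex by `∅`,
and a vertex outside all vortices by itself. Bags grow by a factor of at most `d`. A vertex `x`
of a vortex lies in `f vⱼ` exactly for `j` in an interval, and these `vⱼ` form a subpath of `G₀`,
so the tree nodes whose new bag contains `x` form a union of subtrees glued along the edges
of that path, which is again a subtree.
-/

universe u

/-- `G` has a tree decomposition of width at most `w`. -/
def HasTreeDecomp {V : Type u} (G : SimpleGraph V) (w : ℕ) : Prop :=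
  ∃ (ι : Type u) (tG : SimpleGraph ι) (β : ι → Finset V),
    tG.IsTree ∧
    (∀ v : V, ∃ i, v ∈ β i) ∧
    (∀ u v : V, G.Adj u v → ∃ i, u ∈ β i ∧ v ∈ β i) ∧
    (∀ v : V, (tG.induce {i | v ∈ β i}).Connected) ∧
    (∀ i, (β i).card ≤ w + 1)

/-- The tree-width of `G`, as an extended natural number. -/
noncomputable def treewidth {V : Type u} (G : SimpleGraph V) : ℕ∞ :=
  sInf {n : ℕ∞ | ∃ w : ℕ, HasTreeDecomp G w ∧ n = (w : ℕ∞)}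

open SimpleGraph Set Function

lemma treewidth_le_of_hasTreeDecomp {V : Type u} {G : SimpleGraph V} {w : ℕ}
    (h : HasTreeDecomp G w) : treewidth G ≤ w :=
  sInf_le ⟨w, h, rfl⟩

lemma treewidth_eq_top_or_exists {V : Type u} (G : SimpleGraph V) :
    treewidth G = ⊤ ∨ ∃ w : ℕ, HasTreeDecomp G w ∧ treewidth G = w := by
  by_cases h : ∃ w, HasTreeDecomp G w
  · obtain ⟨w₀, hw₀⟩ := h
    obtain ⟨w, hw, hmin⟩ := csInf_mem (⟨w₀, w₀, hw₀, rfl⟩ :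
      {n : ℕ∞ | ∃ w : ℕ, HasTreeDecomp G w ∧ n = w}.Nonempty)
    exact Or.inr ⟨w, hw, hmin⟩
  · push Not at h
    exact Or.inl (sInf_eq_top.2 fun n ⟨w, hw, _⟩ => absurd hw (h w))

lemma treewidth_le_mul_add_one_sub_one {V W : Type u} {G₀ : SimpleGraph V} {G : SimpleGraph W}
    {d : ℕ} (hd : d ≠ 0) (h : ∀ w, HasTreeDecomp G₀ w → HasTreeDecomp G (d * (w + 1) - 1)) :
    treewidth G ≤ d * (treewidth G₀ + 1) - 1 := by
  obtain htop | ⟨w, hw, htw⟩ := treewidth_eq_top_or_exists G₀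
  · rw [htop, top_add, ENat.mul_top (by exact_mod_cast hd)]
    exact le_top
  · rw [htw]
    calc treewidth G ≤ ((d * (w + 1) - 1 : ℕ) : ℕ∞) := treewidth_le_of_hasTreeDecomp (h w hw)
      _ = d * (w + 1) - 1 := by push_cast [ENat.natCast_sub]; rfl

section Connectivity

variable {V ι : Type*} {G : SimpleGraph V} {T : SimpleGraph ι}

lemma connected_induce_singleton (v : V) : (G.induce {v}).Connected :=
  (connected_iff _).2 ⟨Preconnected.of_subsingleton, ⟨⟨v, rfl⟩⟩⟩

lemma connected_induce_image_Icc {α : Type*} [LinearOrder α] [SuccOrder α] [IsSuccArchimedean α]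
    {g : α → V} (hg : ∀ j k, j ⋖ k → G.Adj (g j) (g k)) {a b : α} (hab : a ≤ b) :
    (G.induce (g '' Icc a b)).Connected := by
  induction hab using Succ.rec with
  | rfl =>
    rw [Icc_self, image_singleton]
    exact connected_induce_singleton (g a)
  | succ b hab ih =>
    by_cases hb : IsMax b
    · rwa [hb.succ_eq]
    rw [Order.Icc_succ_right (hab.trans (Order.le_succ b)), image_insert_eq, insert_eq, union_comm]
    exact connected_induce_union ih.preconnected (connected_induce_singleton _).preconnected
      (mem_image_of_mem g ⟨hab, le_rfl⟩) rfl (hg _ _ (Order.covBy_succ_of_not_isMax hb))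

lemma connected_induce_image_of_ordConnected {α : Type*} [LinearOrder α] [SuccOrder α]
    [IsSuccArchimedean α] {g : α → V} (hg : ∀ j k, j ⋖ k → G.Adj (g j) (g k)) {s : Set α}
    (hs : s.OrdConnected) (hne : s.Nonempty) : (G.induce (g '' s)).Connected := by
  obtain ⟨a, ha⟩ := hne
  refine induce_connected_of_patches (g a) (mem_image_of_mem g ha) ?_
  rintro _ ⟨b, hb, rfl⟩
  exact ⟨g '' uIcc a b, image_mono (hs.uIcc_subset ha hb), mem_image_of_mem g left_mem_uIcc,
    mem_image_of_mem g right_mem_uIcc,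
    (connected_induce_image_Icc hg inf_le_sup).preconnected _ _⟩

lemma connected_induce_biUnion_support {P : V → Set ι} (hP : ∀ u, (T.induce (P u)).Connected)
    (hPadj : ∀ u v, G.Adj u v → (P u ∩ P v).Nonempty) {a b : V} (p : G.Walk a b) :
    (T.induce (⋃ u ∈ {u | u ∈ p.support}, P u)).Connected := by
  induction p with
  | @nil a =>
    have : {u | u ∈ (Walk.nil : G.Walk a a).support} = {a} := by ext; simp
    rw [this, biUnion_singleton]
    exact hP a
  | @cons a c _ hac p ih =>
    have : {u | u ∈ (Walk.cons hac p).support} = insert a {u | u ∈ p.support} := by ext; simp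
    rw [this, biUnion_insert]
    obtain ⟨x, hxa, hxc⟩ := hPadj a c hac
    exact induce_union_connected (hP a).preconnected ih.preconnected
      ⟨x, hxa, Set.mem_biUnion (t := P) p.start_mem_support hxc⟩

lemma connected_induce_biUnion {P : V → Set ι} (hP : ∀ u, (T.induce (P u)).Connected)
    (hPadj : ∀ u v, G.Adj u v → (P u ∩ P v).Nonempty) {S : Set V}
    (hS : (G.induce S).Connected) : (T.induce (⋃ u ∈ S, P u)).Connected := by
  obtain ⟨u₀⟩ := hS.nonempty
  obtain ⟨⟨x₀, hx₀⟩⟩ := (hP u₀).nonempty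
  refine induce_connected_of_patches x₀ (mem_biUnion u₀.2 hx₀) ?_
  intro x hx
  obtain ⟨u, hu, hxu⟩ := mem_iUnion₂.1 hx
  obtain ⟨p⟩ := hS.preconnected u₀ ⟨u, hu⟩
  have hp := connected_induce_biUnion_support (P := fun u : S => P u) (fun u => hP u)
    (fun u v huv => hPadj u v huv) p
  refine ⟨_, ?_, Set.mem_biUnion (t := fun v : S => P v) p.start_mem_support hx₀,
    Set.mem_biUnion (t := fun v : S => P v) p.end_mem_support hxu,
    hp.preconnected _ _⟩
  exact iUnion₂_subset fun v _ => subset_biUnion_of_mem (u := P) v.2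

end Connectivity

theorem HasTreeDecomp.expand {V W : Type u} {G₀ : SimpleGraph V} {G : SimpleGraph W} {w d : ℕ}
    (hG₀ : HasTreeDecomp G₀ w) (f : V → Finset W) (hcard : ∀ u, (f u).card ≤ d)
    (hconn : ∀ x, (G₀.induce {u | x ∈ f u}).Connected)
    (hadj : ∀ x y, G.Adj x y → ∃ u u', x ∈ f u ∧ y ∈ f u' ∧ (u = u' ∨ G₀.Adj u u')) :
    HasTreeDecomp G (d * (w + 1) - 1) := by
  classical
  obtain ⟨ι, T, β, hT, hcover, hedge, hsubtree, hsize⟩ := hG₀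
  refine ⟨ι, T, fun i => (β i).biUnion f, hT, fun x => ?_, fun x y hxy => ?_, fun x => ?_,
    fun i => ?_⟩
  · obtain ⟨⟨u, hu⟩⟩ := (hconn x).nonempty
    obtain ⟨i, hi⟩ := hcover u
    exact ⟨i, Finset.mem_biUnion.2 ⟨u, hi, hu⟩⟩
  · obtain ⟨u, u', hu, hu', rfl | huu'⟩ := hadj x y hxy
    · obtain ⟨i, hi⟩ := hcover u
      exact ⟨i, Finset.mem_biUnion.2 ⟨u, hi, hu⟩, Finset.mem_biUnion.2 ⟨u, hi, hu'⟩⟩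
    · obtain ⟨i, hi, hi'⟩ := hedge u u' huu'
      exact ⟨i, Finset.mem_biUnion.2 ⟨u, hi, hu⟩, Finset.mem_biUnion.2 ⟨u', hi', hu'⟩⟩
  · have hfiber : {i | x ∈ (β i).biUnion f} = ⋃ u ∈ {u | x ∈ f u}, {i | u ∈ β i} := by
      ext i
      simp [and_comm]
    rw [hfiber]
    exact connected_induce_biUnion hsubtree hedge (hconn x)
  · calc ((β i).biUnion f).card ≤ (β i).card * d :=
          Finset.card_biUnion_le_card_mul _ _ _ fun u _ => hcard u
      _ ≤ (w + 1) * d := Nat.mul_le_mul_right d (hsize i)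
      _ ≤ d * (w + 1) - 1 + 1 := by rw [mul_comm]; omega

section Vortex

variable {V : Type u} {m : ℕ} {t : Fin m → ℕ} {bd : (i : Fin m) → Fin (t i) → V}
  {bag : (i : Fin m) → Fin (t i) → Finset V}

variable (bd bag) in
open Classical in
noncomputable def vortexExpansion (u : V) : Finset V :=
  (Finset.univ.filter fun p : Σ i, Fin (t i) => bd p.1 p.2 = u).biUnion (fun p => bag p.1 p.2) ∪
    if ∃ i j, u ∈ bag i j then ∅ else {u}

lemma mem_vortexExpansion {u v : V} :
    v ∈ vortexExpansion bd bag u ↔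
      (∃ i j, bd i j = u ∧ v ∈ bag i j) ∨ (v = u ∧ ∀ i j, u ∉ bag i j) := by
  classical
  unfold vortexExpansion
  split_ifs with h <;> simp_all [or_comm]

lemma injective_sigma_bd (hbdinj : ∀ i, Injective (bd i)) (hbdbag : ∀ i j, bd i j ∈ bag i j)
    (hdisj : ∀ i i', i ≠ i' → ∀ j j', Disjoint ((bag i j : Set V)) ((bag i' j' : Set V))) :
    Injective fun p : Σ i, Fin (t i) => bd p.1 p.2 := by
  rintro ⟨i, j⟩ ⟨i', j'⟩ (h : bd i j = bd i' j')
  obtain rfl : i = i' := by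
    by_contra hii
    exact Set.disjoint_left.1 (hdisj i i' hii j j') (hbdbag i j) (h ▸ hbdbag i' j')
  rw [hbdinj i h]

lemma mem_vortexExpansion_bd {i : Fin m} {j : Fin (t i)} {x : V} (hx : x ∈ bag i j) :
    x ∈ vortexExpansion bd bag (bd i j) :=
  mem_vortexExpansion.2 (Or.inl ⟨i, j, rfl, hx⟩)

lemma card_vortexExpansion_le {d : ℕ} (hd : 1 ≤ d)
    (hinj : Injective fun p : Σ i, Fin (t i) => bd p.1 p.2) (hbdbag : ∀ i j, bd i j ∈ bag i j)
    (hdepth : ∀ i j, (bag i j).card ≤ d) (u : V) : (vortexExpansion bd bag u).card ≤ d := by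
  by_cases hu : ∃ i j, bd i j = u
  · obtain ⟨i, j, rfl⟩ := hu
    refine (Finset.card_le_card fun v hv => ?_).trans (hdepth i j)
    rcases mem_vortexExpansion.1 hv with ⟨i', j', h, hv⟩ | ⟨-, hnot⟩
    · cases @hinj ⟨i', j'⟩ ⟨i, j⟩ h
      exact hv
    · exact absurd (hbdbag i j) (hnot i j)
  · refine (Finset.card_le_card (t := {u}) fun v hv => ?_).trans (by simpa using hd)
    rcases mem_vortexExpansion.1 hv with ⟨i, j, h, -⟩ | ⟨rfl, -⟩
    · exact absurd ⟨i, j, h⟩ hu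
    · exact Finset.mem_singleton_self v

lemma mem_vortexExpansion_self_of_adj {G₀ : SimpleGraph V} (hbdbag : ∀ i j, bd i j ∈ bag i j)
    (hbound : ∀ i x, (∃ j, x ∈ bag i j) → x ∉ Set.range (bd i) → ∀ y, ¬ G₀.Adj x y)
    {x y : V} (hxy : G₀.Adj x y) : x ∈ vortexExpansion bd bag x := by
  by_cases hx : ∃ i j, x ∈ bag i j
  · obtain ⟨i, j, hj⟩ := hx
    by_contra hnot
    refine hbound i x ⟨j, hj⟩ ?_ y hxy
    rintro ⟨j', rfl⟩
    exact hnot (mem_vortexExpansion_bd (hbdbag i j'))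
  · push Not at hx
    exact mem_vortexExpansion.2 (Or.inr ⟨rfl, hx⟩)

lemma connected_induce_setOf_mem_vortexExpansion {G₀ : SimpleGraph V}
    (hdisj : ∀ i i', i ≠ i' → ∀ j j', Disjoint ((bag i j : Set V)) ((bag i' j' : Set V)))
    (hinterval : ∀ i (j₁ j₂ j₃ : Fin (t i)), j₁ ≤ j₂ → j₂ ≤ j₃ →
      ∀ x, x ∈ bag i j₁ → x ∈ bag i j₃ → x ∈ bag i j₂)
    (hpath : ∀ i (j : Fin (t i)) (h : (j : ℕ) + 1 < t i),
      G₀.Adj (bd i j) (bd i ⟨(j : ℕ) + 1, h⟩))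
    (x : V) : (G₀.induce {u | x ∈ vortexExpansion bd bag u}).Connected := by
  by_cases hx : ∃ i j, x ∈ bag i j
  · obtain ⟨i, j₀, hj₀⟩ := hx
    have hfiber : {u | x ∈ vortexExpansion bd bag u} = bd i '' {j | x ∈ bag i j} := by
      ext u
      simp only [Set.mem_ofPred_eq, mem_vortexExpansion, Set.mem_image]
      constructor
      · rintro (⟨i', j, rfl, hj⟩ | ⟨rfl, hnot⟩)
        · obtain rfl : i' = i := by
            by_contra hii
            exact Set.disjoint_left.1 (hdisj i' i hii j j₀) hj hj₀
          exact ⟨j, hj, rfl⟩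
        · exact absurd hj₀ (hnot i j₀)
      · rintro ⟨j, hj, rfl⟩
        exact Or.inl ⟨i, j, rfl, hj⟩
    rw [hfiber]
    refine connected_induce_image_of_ordConnected (fun j k hjk => ?_) ?_ ⟨j₀, hj₀⟩
    · have hk : (j : ℕ) + 1 = k := Nat.covBy_iff_add_one_eq.1 (Fin.covBy_iff.1 hjk)
      have hk' : (⟨(j : ℕ) + 1, hk ▸ k.2⟩ : Fin (t i)) = k := Fin.ext hk
      simpa only [hk'] using hpath i j (hk ▸ k.2)
    · exact Set.ordConnected_def.2 fun j₁ hj₁ j₃ hj₃ j₂ hj₂ =>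
        hinterval i j₁ j₂ j₃ hj₂.1 hj₂.2 x hj₁ hj₃
  · push Not at hx
    have hfiber : {u | x ∈ vortexExpansion bd bag u} = {x} := by
      ext u
      simp only [Set.mem_ofPred_eq, mem_vortexExpansion, Set.mem_singleton_iff]
      constructor
      · rintro (⟨i, j, -, hj⟩ | ⟨rfl, -⟩)
        · exact absurd hj (hx i j)
        · rfl
      · rintro rfl
        exact Or.inr ⟨rfl, hx⟩
    rw [hfiber]
    exact connected_induce_singleton x

end Vortex

/-- If `G = G₀ ∪ G₁ ∪ ⋯ ∪ G_m` where the `Gᵢ` (`i ≥ 1`) are vortices of depth at most `d`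
with pairwise disjoint vertex sets, attached to `G₀` only along their boundary vertices
which form paths in `G₀` in vortex order, then `tw(G) ≤ d·(tw(G₀) + 1) − 1`. -/
theorem stmt7 {V : Type u} (G G₀ : SimpleGraph V) (m d : ℕ) (hd : 1 ≤ d)
    (Gv : Fin m → SimpleGraph V)
    (t : Fin m → ℕ)
    (bd : (i : Fin m) → Fin (t i) → V)
    (bag : (i : Fin m) → Fin (t i) → Finset V)
    -- the boundary vertices of each vortex are distinct, and `bd i j ∈ bag i j`
    (hbdinj : ∀ i, Function.Injective (bd i))
    (hbdbag : ∀ i j, bd i j ∈ bag i j)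
    -- the vortices have depth at most `d`
    (hdepth : ∀ i j, (bag i j).card ≤ d)
    -- the bags form a path decomposition of the vortex `Gv i`
    (hedge : ∀ i u v, (Gv i).Adj u v → ∃ j, u ∈ bag i j ∧ v ∈ bag i j)
    (hinterval : ∀ i (j₁ j₂ j₃ : Fin (t i)), j₁ ≤ j₂ → j₂ ≤ j₃ →
      ∀ x, x ∈ bag i j₁ → x ∈ bag i j₃ → x ∈ bag i j₂)
    -- the vertex sets of distinct vortices are disjoint
    (hdisj : ∀ i i', i ≠ i' → ∀ j j', Disjoint ((bag i j : Set V)) ((bag i' j' : Set V)))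
    -- `G₀` meets each vortex only in its boundary vertices
    (hbound : ∀ i x, (∃ j, x ∈ bag i j) → x ∉ Set.range (bd i) → ∀ y, ¬ G₀.Adj x y)
    -- the boundary vertices of each vortex, in order, form a path in `G₀`
    (hpath : ∀ i (j : Fin (t i)) (h : (j : ℕ) + 1 < t i),
      G₀.Adj (bd i j) (bd i ⟨(j : ℕ) + 1, h⟩))
    (hunion : G = G₀ ⊔ (⨆ i, Gv i)) :
    treewidth G ≤ (d : ℕ∞) * (treewidth G₀ + 1) - 1 := by
  refine treewidth_le_mul_add_one_sub_one (by omega) fun w hw => hw.expand (vortexExpansion bd bag)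
    (card_vortexExpansion_le hd (injective_sigma_bd hbdinj hbdbag hdisj) hbdbag hdepth)
    (connected_induce_setOf_mem_vortexExpansion hdisj hinterval hpath) ?_
  subst hunion
  rintro x y (hxy | hxy)
  · exact ⟨x, y, mem_vortexExpansion_self_of_adj hbdbag hbound hxy,
      mem_vortexExpansion_self_of_adj hbdbag hbound hxy.symm, Or.inr hxy⟩
  · obtain ⟨i, hxy⟩ := iSup_adj.1 hxy
    obtain ⟨j, hx, hy⟩ := hedge i x y hxy
    exact ⟨bd i j, bd i j, mem_vortexExpansion_bd hx, mem_vortexExpansion_bd hy, Or.inl rfl⟩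
end

section
/- Let G be a graph and Y ⊆ V(G) with |Y| = 3θ − 2 for an integer θ ≥ 1, such that there is no separation (C, D) of G of order less than θ with |V(C) ∩ (V(D) ∪ Y)| < 3θ − 2 and |V(D) ∩ (V(C) ∪ Y)| < 3θ − 2. Then the set T of all separations (C, D) of G of order less than θ with |V(C) ∩ Y| ≤ θ − 1 is a tangle of order θ in G: (i) for every separation (C,D) of order < θ, exactly one of (C,D), (D,C) is in T; (ii) if (C₁,D₁), (C₂,D₂), (C₃,D₃) ∈ T then C₁ ∪ C₂ ∪ C₃ ≠ G; (iii) no (C,D) ∈ T has V(C) = V(G). -/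
/-!
Every separation `(C, D)` of order `< θ` splits `Y`, so `|V(C) ∩ Y| + |V(D) ∩ Y| ≥ 3θ − 2`.
If both sides met `Y` in at least `θ` vertices, then `V(C) ∩ (V(D) ∪ Y)` would lie in the
separator (fewer than `θ` vertices) together with the at most `2θ − 2` vertices of `Y` outside
`V(D)`, and symmetrically for `D`; this is the separation excluded by hypothesis. Hence exactly one
side is small, which is (i). Three small sides meet `Y` in at most `3θ − 3` vertices, so they
cannot cover `G`, and no small side contains all of `Y`, which gives (ii) and (iii).
-/

namespace Set

variable {α : Type*}

theorem ncard_union_inter_le (A B Y : Set α) :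
    ((A ∪ B) ∩ Y).ncard ≤ (A ∩ Y).ncard + (B ∩ Y).ncard := by
  rw [union_inter_distrib_right]
  exact ncard_union_le _ _

theorem ncard_inter_union_add_ncard_inter_le [Finite α] (A B Y : Set α) :
    (A ∩ (B ∪ Y)).ncard + (B ∩ Y).ncard ≤ (A ∩ B).ncard + Y.ncard := by
  have hsub : A ∩ (B ∪ Y) ⊆ (A ∩ B) ∪ (Y \ B) := by
    rintro x ⟨hxA, hxB | hxY⟩
    · exact Or.inl ⟨hxA, hxB⟩
    · by_cases hxB : x ∈ B
      · exact Or.inl ⟨hxA, hxB⟩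
      · exact Or.inr ⟨hxY, hxB⟩
  have hsplit : (B ∩ Y).ncard + (Y \ B).ncard = Y.ncard := by
    rw [inter_comm, ncard_inter_add_ncard_sdiff_eq_ncard Y B]
  have := (ncard_le_ncard hsub).trans (ncard_union_le _ _)
  omega

end Set

namespace SimpleGraph.Subgraph

variable {V : Type*} {G : SimpleGraph V}

theorem verts_union_eq_univ_of_sup_eq_top {H K : G.Subgraph} (h : H ⊔ K = ⊤) :
    H.verts ∪ K.verts = Set.univ := by
  simpa using congrArg verts h

end SimpleGraph.Subgraph

theorem stmt15_general {V : Type*} [Fintype V] (G : SimpleGraph V) (θ : ℕ)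
    (Y : Set V) (hY : Y.ncard = 3 * θ - 2)
    (hno : ¬ ∃ C D : G.Subgraph, C ⊔ D = ⊤ ∧ (C.verts ∩ D.verts).ncard < θ ∧
      (C.verts ∩ (D.verts ∪ Y)).ncard < 3 * θ - 2 ∧
      (D.verts ∩ (C.verts ∪ Y)).ncard < 3 * θ - 2) :
    -- `T` consists of the separations of order `< θ` whose small side meets `Y`
    -- in at most `θ − 1` vertices
    letI T : Set (G.Subgraph × G.Subgraph) :=
      {p | p.1 ⊔ p.2 = ⊤ ∧ (p.1.verts ∩ p.2.verts).ncard < θ ∧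
        (p.1.verts ∩ Y).ncard ≤ θ - 1}
    -- (i) of every separation of order `< θ`, exactly one orientation lies in `T`
    (∀ C D : G.Subgraph, C ⊔ D = ⊤ → (C.verts ∩ D.verts).ncard < θ →
      Xor' ((C, D) ∈ T) ((D, C) ∈ T)) ∧
    -- (ii) no three small sides cover `G`
    (∀ p₁ p₂ p₃, p₁ ∈ T → p₂ ∈ T → p₃ ∈ T → p₁.1 ⊔ p₂.1 ⊔ p₃.1 ≠ ⊤) ∧
    -- (iii) no small side contains all vertices
    (∀ p ∈ T, p.1.verts ≠ Set.univ) := by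
  have hcover : ∀ C D : G.Subgraph, C ⊔ D = ⊤ →
      Y.ncard ≤ (C.verts ∩ Y).ncard + (D.verts ∩ Y).ncard := fun C D h => by
    simpa [SimpleGraph.Subgraph.verts_union_eq_univ_of_sup_eq_top h] using
      Set.ncard_union_inter_le C.verts D.verts Y
  have hsmall : ∀ C D : G.Subgraph, C ⊔ D = ⊤ → (C.verts ∩ D.verts).ncard < θ →
      (C.verts ∩ Y).ncard ≤ θ - 1 ∨ (D.verts ∩ Y).ncard ≤ θ - 1 := by
    intro C D hCD hord
    by_contra! hbig
    have hC := Set.ncard_inter_union_add_ncard_inter_le C.verts D.verts Y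
    have hD := Set.ncard_inter_union_add_ncard_inter_le D.verts C.verts Y
    rw [Set.inter_comm D.verts C.verts] at hD
    exact hno ⟨C, D, hCD, hord, by omega, by omega⟩
  refine ⟨fun C D hCD hord => ?_, fun p₁ p₂ p₃ h₁ h₂ h₃ htop => ?_, fun p hp huniv => ?_⟩
  · simp only [Set.mem_ofPred_eq, sup_comm D C, Set.inter_comm D.verts C.verts, hCD, hord,
      true_and]
    have hsplit := hcover C D hCD
    have hone := hsmall C D hCD hord
    exact xor_def.mpr (by omega)
  · have hU : p₁.1.verts ∪ p₂.1.verts ∪ p₃.1.verts = Set.univ := by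
      simpa using SimpleGraph.Subgraph.verts_union_eq_univ_of_sup_eq_top htop
    have h₁₂ := Set.ncard_union_inter_le p₁.1.verts p₂.1.verts Y
    have h₁₂₃ := Set.ncard_union_inter_le (p₁.1.verts ∪ p₂.1.verts) p₃.1.verts Y
    rw [hU, Set.univ_inter] at h₁₂₃
    obtain ⟨-, hord₁, hY₁⟩ := h₁
    obtain ⟨-, -, hY₂⟩ := h₂
    obtain ⟨-, -, hY₃⟩ := h₃
    omega
  · obtain ⟨-, hord, hpY⟩ := hp
    rw [huniv, Set.univ_inter] at hpY
    omega

/-- If `|Y| = 3θ − 2` and `G` has no separation of order `< θ` with both sides containing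
fewer than `3θ − 2` vertices of the other side together with `Y`, then the separations
`(C, D)` of order `< θ` with `|V(C) ∩ Y| ≤ θ − 1` form a tangle of order `θ`. -/
theorem stmt15 {V : Type*} [Fintype V] (G : SimpleGraph V) (θ : ℕ) (hθ : 1 ≤ θ)
    (Y : Set V) (hY : Y.ncard = 3 * θ - 2)
    (hno : ¬ ∃ C D : G.Subgraph, C ⊔ D = ⊤ ∧ (C.verts ∩ D.verts).ncard < θ ∧
      (C.verts ∩ (D.verts ∪ Y)).ncard < 3 * θ - 2 ∧
      (D.verts ∩ (C.verts ∪ Y)).ncard < 3 * θ - 2) :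
    -- `T` consists of the separations of order `< θ` whose small side meets `Y`
    -- in at most `θ − 1` vertices
    letI T : Set (G.Subgraph × G.Subgraph) :=
      {p | p.1 ⊔ p.2 = ⊤ ∧ (p.1.verts ∩ p.2.verts).ncard < θ ∧
        (p.1.verts ∩ Y).ncard ≤ θ - 1}
    -- (i) of every separation of order `< θ`, exactly one orientation lies in `T`
    (∀ C D : G.Subgraph, C ⊔ D = ⊤ → (C.verts ∩ D.verts).ncard < θ →
      Xor' ((C, D) ∈ T) ((D, C) ∈ T)) ∧
    -- (ii) no three small sides cover `G`
    (∀ p₁ p₂ p₃, p₁ ∈ T → p₂ ∈ T → p₃ ∈ T → p₁.1 ⊔ p₂.1 ⊔ p₃.1 ≠ ⊤) ∧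
    -- (iii) no small side contains all vertices
    (∀ p ∈ T, p.1.verts ≠ Set.univ) :=
  stmt15_general G θ Y hY hno
end

section
/- Let k ≥ 3 and let G be a graph consisting of vertices c, x₀, x₁, …, x_m together with, for each 1 ≤ i ≤ m, an A-gadget on the triple (c, x_{i−1}, xᵢ), where an A-gadget on (a,b,c) is a graph whose set of proper k-colorings restricted to {a,b,c} is exactly the set of colorings where either all three vertices get the same color or all three get pairwise distinct colors. Then in every proper k-coloring ψ of G, either ψ(x_{i−1}) = ψ(xᵢ) for all 1 ≤ i ≤ m, or ψ(x_{i−1}) ≠ ψ(xᵢ) for all 1 ≤ i ≤ m. -/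
/-! Each gadget forces `φ c = φ x_{i-1} ↔ φ c = φ x_i`, so whether `x_i` shares the color of `c`
does not depend on `i`. If all `x_i` share it, consecutive colors are equal; otherwise no
triple is monochromatic, so each one is rainbow and consecutive colors differ. -/

theorem Fin.iff_zero_of_iff_castSucc_succ {m : ℕ} {P : Fin (m + 1) → Prop}
    (h : ∀ i : Fin m, P i.castSucc ↔ P i.succ) (i : Fin (m + 1)) : P i ↔ P 0 := by
  induction i using Fin.induction with
  | zero => rfl
  | succ j ih => exact (h j).symm.trans ih

theorem forall_eq_or_forall_ne_of_forall_allEq_or_rainbow {α : Type*} {m : ℕ}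
    (c : α) (f : Fin (m + 1) → α)
    (h : ∀ i : Fin m, (c = f i.castSucc ∧ c = f i.succ) ∨
      (c ≠ f i.castSucc ∧ c ≠ f i.succ ∧ f i.castSucc ≠ f i.succ)) :
    (∀ i : Fin m, f i.castSucc = f i.succ) ∨ (∀ i : Fin m, f i.castSucc ≠ f i.succ) := by
  have hstep : ∀ i : Fin m, c = f i.castSucc ↔ c = f i.succ := fun i => by
    rcases h i with ⟨h₁, h₂⟩ | ⟨h₁, h₂, -⟩
    · exact iff_of_true h₁ h₂
    · exact iff_of_false h₁ h₂
  have hzero := Fin.iff_zero_of_iff_castSucc_succ (P := fun j => c = f j) hstep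
  by_cases h0 : c = f 0
  · exact .inl fun i => ((hzero _).2 h0).symm.trans ((hzero _).2 h0)
  · refine .inr fun i => ?_
    rcases h i with ⟨h₁, -⟩ | ⟨-, -, hne⟩
    · exact absurd ((hzero _).1 h₁) h0
    · exact hne

theorem stmt19_general {V : Type*} (k : ℕ) (m : ℕ)
    (G : SimpleGraph V) (Hg : Fin m → SimpleGraph V)
    (c : V) (x : Fin (m + 1) → V)
    -- `G` is the union of the gadgets
    (hG : G = ⨆ i, Hg i)
    -- each `Hg i` is an `A`-gadget on `(c, x_{i-1}, x_i)` for `k`-coloring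
    (hgadget : ∀ i : Fin m,
      {p : Fin k × Fin k × Fin k | ∃ φ : V → Fin k,
          (∀ u v, (Hg i).Adj u v → φ u ≠ φ v) ∧
          p = (φ c, φ (x i.castSucc), φ (x i.succ))} =
      {p : Fin k × Fin k × Fin k |
        (p.1 = p.2.1 ∧ p.1 = p.2.2) ∨
        (p.1 ≠ p.2.1 ∧ p.1 ≠ p.2.2 ∧ p.2.1 ≠ p.2.2)}) :
    ∀ φ : V → Fin k, (∀ u v, G.Adj u v → φ u ≠ φ v) →
      (∀ i : Fin m, φ (x i.castSucc) = φ (x i.succ)) ∨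
      (∀ i : Fin m, φ (x i.castSucc) ≠ φ (x i.succ)) := by
  intro φ hφ
  refine forall_eq_or_forall_ne_of_forall_allEq_or_rainbow (φ c) (φ ∘ x) fun i => ?_
  have hrestrict : (φ c, φ (x i.castSucc), φ (x i.succ)) ∈
      {p : Fin k × Fin k × Fin k | ∃ φ : V → Fin k,
        (∀ u v, (Hg i).Adj u v → φ u ≠ φ v) ∧
        p = (φ c, φ (x i.castSucc), φ (x i.succ))} :=
    ⟨φ, fun u v huv => hφ u v (hG ▸ le_iSup Hg i huv), rfl⟩
  rw [hgadget i] at hrestrict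
  exact hrestrict

/-- In a chain of `A`-gadgets on the triples `(c, x_{i-1}, x_i)` (where `A` consists of
the `k`-colorings of a triple whose values are all equal or pairwise distinct), every
proper `k`-coloring either makes all consecutive pairs `x_{i-1}, x_i` equal, or makes all
of them distinct. -/
theorem stmt19 {V : Type*} (k : ℕ) (hk : 3 ≤ k) (m : ℕ)
    (G : SimpleGraph V) (Hg : Fin m → SimpleGraph V)
    (c : V) (x : Fin (m + 1) → V)
    (hxinj : Function.Injective x) (hcx : ∀ i, c ≠ x i)
    -- `G` is the union of the gadgets
    (hG : G = ⨆ i, Hg i)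
    -- each `Hg i` is an `A`-gadget on `(c, x_{i-1}, x_i)` for `k`-coloring
    (hgadget : ∀ i : Fin m,
      {p : Fin k × Fin k × Fin k | ∃ φ : V → Fin k,
          (∀ u v, (Hg i).Adj u v → φ u ≠ φ v) ∧
          p = (φ c, φ (x i.castSucc), φ (x i.succ))} =
      {p : Fin k × Fin k × Fin k |
        (p.1 = p.2.1 ∧ p.1 = p.2.2) ∨
        (p.1 ≠ p.2.1 ∧ p.1 ≠ p.2.2 ∧ p.2.1 ≠ p.2.2)}) :
    ∀ φ : V → Fin k, (∀ u v, G.Adj u v → φ u ≠ φ v) →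
      (∀ i : Fin m, φ (x i.castSucc) = φ (x i.succ)) ∨
      (∀ i : Fin m, φ (x i.castSucc) ≠ φ (x i.succ)) :=
  stmt19_general k m G Hg c x hG hgadget
end
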